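/- Let k be an algebraically closed field of characteristic zero and let d ≥ 3. Let K := Frac(k[x,y]/(x^d + y^d + 1)) be the function field of the Fermat curve X^d + Y^d + Z^d = 0, and let u := x/y ∈ K. Then the extension K/k(u) is a Galois extension of degree d with cyclic Galois group. (Equivalently: the point (0:0:1) is an outer Galois point for the Fermat curve of degree d; together with the analogous statements for (1:0:0) and (0:1:0), the Fermat curve has three non-collinear outer Galois points.) -/

import Mathlib

open MvPolynomial

/-- The dehomogenization `f(x,y) = F(x,y,1)` of a homogeneous polynomial in three variables. -/
noncomputable def dehom {k : Type*} [CommSemiring k] (F : MvPolynomial (Fin 3) k) :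
    MvPolynomial (Fin 2) k :=
  MvPolynomial.aeval ![MvPolynomial.X 0, MvPolynomial.X 1, 1] F

/-- `K`, together with elements `x y : K`, is (a copy of) the function field
`Frac(k[x,y]/(F(x,y,1)))` of the plane curve `{F = 0}`. -/
def IsFunctionFieldOf (k : Type*) {K : Type*} [Field k] [Field K] [Algebra k K]
    (F : MvPolynomial (Fin 3) k) (x y : K) : Prop :=
  IntermediateField.adjoin k {x, y} = ⊤ ∧
    ∀ g : MvPolynomial (Fin 2) k, MvPolynomial.aeval ![x, y] g = 0 ↔ dehom F ∣ g

/-- The projection with fibre field `k(u)` is Galois of degree `d`. -/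
def IsGaloisProjection (k : Type*) {K : Type*} [Field k] [Field K] [Algebra k K]
    (u : K) (d : ℕ) : Prop :=
  IsGalois (IntermediateField.adjoin k {u}) K ∧
    Module.finrank (IntermediateField.adjoin k {u}) K = d

/-- The Galois group of the projection corresponding to `k(u) ⊆ K`, viewed as the subgroup
of `Aut_k(K)` fixing `k(u)` elementwise. -/
def galGroup (k : Type*) {K : Type*} [Field k] [Field K] [Algebra k K] (u : K) :
    Subgroup (K ≃ₐ[k] K) :=
  (IntermediateField.adjoin k {u}).fixingSubgroup

/-- The Fermat polynomial `X^d + Y^d + Z^d`. -/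
noncomputable def fermatPoly (k : Type*) [CommSemiring k] (d : ℕ) : MvPolynomial (Fin 3) k :=
  MvPolynomial.X 0 ^ d + MvPolynomial.X 1 ^ d + MvPolynomial.X 2 ^ d

/-- `F` is projectively equivalent to the Fermat curve of degree `d`:
`F((X,Y,Z)·A) = c (X^d+Y^d+Z^d)` for some invertible matrix `A` and `c ≠ 0`. -/
def ProjEquivToFermat {k : Type*} [Field k] (d : ℕ) (F : MvPolynomial (Fin 3) k) : Prop :=
  ∃ A : Matrix (Fin 3) (Fin 3) k, IsUnit A.det ∧ ∃ c : k, c ≠ 0 ∧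
    MvPolynomial.aeval (fun i => ∑ j, MvPolynomial.C (A j i) * MvPolynomial.X j) F =
      MvPolynomial.C c * fermatPoly k d

/-- `K` is not isomorphic, as a `k`-algebra, to the rational function field `k(t)`. -/
noncomputable def NotRational (k K : Type*) [Field k] [Field K] [Algebra k K] : Prop :=
  ¬ Nonempty (K ≃ₐ[k] RatFunc k)

/-! With `u = x/y` and `z = 1/y`, the Fermat relation reads `z^d = -(u^d + 1)` and `K = k(u)(z)`.
The element `u` is transcendental, since otherwise the line `x = c y` would contain the curve;
so `k(u) ≅ k(T)`, over which `X^d + (T^d + 1)` is Eisenstein at a simple root of `T^d + 1`.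
Thus `K/k(u)` is a Kummer extension of degree `d`, as `k` contains the `d`-th roots of unity. -/

open Polynomial IntermediateField

theorem Polynomial.irreducible_X_pow_sub_C_of_mem_of_notMem_sq {R L : Type*} [CommRing R]
    [IsDomain R] [IsIntegrallyClosed R] [Field L] [Algebra R L] [IsFractionRing R L]
    {P : Ideal R} (hP : P.IsPrime) {a : R} (ha : a ∈ P) (ha2 : a ∉ P ^ 2) {n : ℕ}
    (hn : n ≠ 0) :
    Irreducible (X ^ n - C (algebraMap R L a)) := by
  have hmonic : (X ^ n - C a : R[X]).Monic := monic_X_pow_sub_C a hn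
  have hdeg : (X ^ n - C a : R[X]).degree = n := degree_X_pow_sub_C (Nat.pos_of_ne_zero hn) a
  have hirr : Irreducible (X ^ n - C a : R[X]) := by
    refine irreducible_of_eisenstein_criterion hP ?_ ?_ ?_ ?_ hmonic.isPrimitive
    · rw [hmonic.leadingCoeff]
      exact fun h => hP.ne_top ((Ideal.eq_top_iff_one P).mpr h)
    · intro m hm
      rw [hdeg, Nat.cast_lt] at hm
      simp only [coeff_sub, coeff_X_pow, coeff_C, hm.ne, if_false, zero_sub, neg_mem_iff]
      split_ifs
      exacts [ha, P.zero_mem]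
    · rw [hdeg]
      exact_mod_cast Nat.pos_of_ne_zero hn
    · simpa [coeff_C, hn, coeff_X_pow, Ne.symm hn] using ha2
  simpa using (hmonic.irreducible_iff_irreducible_map_fraction_map (K := L)).mp hirr

theorem Polynomial.irreducible_X_pow_sub_C_ratFunc_of_squarefree_of_isRoot {k : Type*}
    [Field k] {p : k[X]} (hp : Squarefree p) {c : k} (hc : p.IsRoot c) {n : ℕ} (hn : n ≠ 0) :
    Irreducible (X ^ n - C (algebraMap k[X] (RatFunc k) p)) := by
  refine irreducible_X_pow_sub_C_of_mem_of_notMem_sq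
    ((Ideal.span_singleton_prime (X_sub_C_ne_zero c)).mpr (prime_X_sub_C c)) ?_ ?_ hn
  · rwa [Ideal.mem_span_singleton, dvd_iff_isRoot]
  · rw [Ideal.span_singleton_pow, Ideal.mem_span_singleton, sq]
    exact fun h => not_isUnit_X_sub_C c (hp _ h)

theorem Polynomial.irreducible_X_pow_sub_C_neg_X_pow_add_one_ratFunc {k : Type*} [Field k]
    [IsAlgClosed k] [CharZero k] {d : ℕ} (hd : d ≠ 0) :
    Irreducible (X ^ d - C (algebraMap k[X] (RatFunc k) (-(X ^ d + 1)))) := by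
  obtain ⟨ζ, hζ⟩ := IsAlgClosed.exists_pow_nat_eq (-1 : k) (Nat.pos_of_ne_zero hd)
  have hsq : Squarefree (X ^ d + 1 : k[X]) := by
    simpa using (separable_X_pow_sub_C (-1 : k) (Nat.cast_ne_zero.mpr hd) (by simp)).squarefree
  exact irreducible_X_pow_sub_C_ratFunc_of_squarefree_of_isRoot
    ((Associated.refl _).neg_left.squarefree_iff.mpr hsq) (c := ζ) (by simp [hζ]) hd

theorem primitiveRoots_nonempty_of_isAlgClosed (k F : Type*) [Field k] [IsAlgClosed k]
    [CharZero k] [Field F] [Algebra k F] {n : ℕ} (hn : n ≠ 0) :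
    (primitiveRoots n F).Nonempty := by
  have : NeZero (n : k) := ⟨Nat.cast_ne_zero.mpr hn⟩
  obtain ⟨ω, hω⟩ := HasEnoughRootsOfUnity.exists_primitiveRoot k n
  exact ⟨_, (mem_primitiveRoots (Nat.pos_of_ne_zero hn)).mpr
    (hω.map_of_injective (algebraMap k F).injective)⟩

theorem Polynomial.isSplittingField_X_pow_sub_C_of_adjoin_eq_top {F K : Type*} [Field F]
    [Field K] [Algebra F K] {n : ℕ} (hζ : (primitiveRoots n F).Nonempty) {a : F} {z : K}
    (hz : z ^ n = algebraMap F K a) (hK : F⟮z⟯ = ⊤) :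
    IsSplittingField F K (X ^ n - C a) := by
  have hn : 0 < n := Nat.pos_of_ne_zero fun h => by simp [h] at hζ
  have hz_int : IsIntegral F z := ⟨X ^ n - C a, monic_X_pow_sub_C a hn.ne', by simp [hz]⟩
  constructor
  · rw [Polynomial.map_sub, Polynomial.map_pow, Polynomial.map_C, Polynomial.map_X]
    obtain ⟨ζ, hζ⟩ := hζ
    rw [mem_primitiveRoots hn] at hζ
    exact X_pow_sub_C_splits_of_isPrimitiveRoot (hζ.map_of_injective (algebraMap F K).injective) hz
  · rw [eq_top_iff, ← IntermediateField.top_toSubalgebra, ← hK,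
      IntermediateField.adjoin_simple_toSubalgebra_of_isAlgebraic hz_int.isAlgebraic]
    apply Algebra.adjoin_mono
    rw [Set.singleton_subset_iff, mem_rootSet_of_ne (X_pow_sub_C_ne_zero hn a)]
    simp [hz]

theorem adjoin_adjoin_div_inv_eq_top {k K : Type*} [Field k] [Field K] [Algebra k K] {x y : K}
    (hxy : IntermediateField.adjoin k {x, y} = ⊤) (hy : y ≠ 0) :
    (k⟮x / y⟯)⟮y⁻¹⟯ = ⊤ := by
  apply restrictScalars_injective k
  rw [restrictScalars_top, eq_top_iff, ← hxy, adjoin_le_iff, Set.insert_subset_iff,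
    Set.singleton_subset_iff]
  have hy_mem : y ∈ (k⟮x / y⟯)⟮y⁻¹⟯ := by
    simpa using inv_mem (mem_adjoin_simple_self (k⟮x / y⟯) y⁻¹)
  have hu_mem : x / y ∈ (k⟮x / y⟯)⟮y⁻¹⟯ :=
    IntermediateField.algebraMap_mem _ (⟨x / y, mem_adjoin_simple_self k _⟩ : k⟮x / y⟯)
  refine ⟨?_, hy_mem⟩
  simpa [div_mul_cancel₀ x hy] using mul_mem hu_mem hy_mem

theorem dehom_fermatPoly (k : Type*) [CommSemiring k] (d : ℕ) :
    dehom (fermatPoly k d) = MvPolynomial.X 0 ^ d + MvPolynomial.X 1 ^ d + 1 := by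
  simp [dehom, fermatPoly]

theorem le_totalDegree_dehom_fermatPoly (k : Type*) [CommSemiring k] [Nontrivial k] (d : ℕ) :
    d ≤ (dehom (fermatPoly k d)).totalDegree := by
  rcases Nat.eq_zero_or_pos d with rfl | hd
  · exact Nat.zero_le _
  have hmem : Finsupp.single 0 d ∈ (dehom (fermatPoly k d)).support := by
    rw [MvPolynomial.mem_support_iff, dehom_fermatPoly]
    simp [MvPolynomial.coeff_X_pow, MvPolynomial.coeff_one, Finsupp.single_eq_single_iff, hd.ne',
      @eq_comm _ (0 : Fin 2 →₀ ℕ)]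
  simpa using MvPolynomial.le_totalDegree hmem

namespace IsFunctionFieldOf

variable {k K : Type*} [Field k] [Field K] [Algebra k K] {d : ℕ} {x y : K}

theorem pow_add_pow_add_one_eq_zero (hff : IsFunctionFieldOf k (fermatPoly k d) x y) :
    x ^ d + y ^ d + 1 = 0 := by
  simpa [dehom_fermatPoly] using (hff.2 (dehom (fermatPoly k d))).mpr dvd_rfl

theorem inv_pow_eq_neg_div_pow_add_one (hff : IsFunctionFieldOf k (fermatPoly k d) x y)
    (hy : y ≠ 0) : y⁻¹ ^ d = -((x / y) ^ d + 1) := by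
  have hyd : y ^ d ≠ 0 := pow_ne_zero d hy
  rw [inv_pow, div_pow]
  field_simp
  linear_combination hff.pow_add_pow_add_one_eq_zero

theorem aeval_ne_zero_of_totalDegree_lt (hff : IsFunctionFieldOf k (fermatPoly k d) x y)
    {g : MvPolynomial (Fin 2) k} (hg : g ≠ 0) (hgd : g.totalDegree < d) :
    MvPolynomial.aeval ![x, y] g ≠ 0 := fun h =>
  (MvPolynomial.totalDegree_le_of_dvd_of_isDomain ((hff.2 g).mp h) hg).trans_lt hgd
    |>.not_ge (le_totalDegree_dehom_fermatPoly k d)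

theorem ne_zero_right (hff : IsFunctionFieldOf k (fermatPoly k d) x y) (hd : 2 ≤ d) :
    y ≠ 0 := by
  simpa using hff.aeval_ne_zero_of_totalDegree_lt (MvPolynomial.X_ne_zero 1)
    (by rw [MvPolynomial.totalDegree_X]; omega)

theorem transcendental_div [IsAlgClosed k] (hff : IsFunctionFieldOf k (fermatPoly k d) x y)
    (hd : 2 ≤ d) : Transcendental k (x / y) := by
  intro halg
  obtain ⟨c, hc⟩ : x / y ∈ (algebraMap k K).range :=
    minpoly.mem_range_of_degree_eq_one k _
      (IsAlgClosed.degree_eq_one_of_irreducible k (minpoly.irreducible halg.isIntegral))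
  have hg : (MvPolynomial.X 0 - c • MvPolynomial.X 1 : MvPolynomial (Fin 2) k) ≠ 0 :=
    fun h => by simpa using congrArg (MvPolynomial.eval ![1, 0]) h
  have hgd : (MvPolynomial.X 0 - c • MvPolynomial.X 1 : MvPolynomial (Fin 2) k).totalDegree < d :=
    calc _ ≤ max (MvPolynomial.X 0 : MvPolynomial (Fin 2) k).totalDegree
          (c • MvPolynomial.X 1 : MvPolynomial (Fin 2) k).totalDegree :=
          MvPolynomial.totalDegree_sub _ _
      _ ≤ 1 := max_le (MvPolynomial.totalDegree_X 0).le
          ((MvPolynomial.totalDegree_smul_le _ _).trans (MvPolynomial.totalDegree_X 1).le)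
      _ < d := hd
  apply hff.aeval_ne_zero_of_totalDegree_lt hg hgd
  simp [Algebra.smul_def, hc, div_mul_cancel₀ x (hff.ne_zero_right hd)]

end IsFunctionFieldOf

/-- The point `(0:0:1)` is an outer Galois point for the Fermat curve of
degree `d ≥ 3`: with `K = Frac(k[x,y]/(x^d+y^d+1))` the function field of the Fermat curve
and `u = x/y`, the extension `K/k(u)` is Galois of degree `d` with cyclic Galois group. -/
theorem fermat_outer_galois_point_xy
    {k K : Type*} [Field k] [IsAlgClosed k] [CharZero k] [Field K] [Algebra k K]
    (d : ℕ) (hd : 3 ≤ d) (x y : K)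
    (hff : IsFunctionFieldOf k (fermatPoly k d) x y) :
    IsGalois (IntermediateField.adjoin k ({x / y} : Set K)) K ∧
    Module.finrank (IntermediateField.adjoin k ({x / y} : Set K)) K = d ∧
    IsCyclic (galGroup k (x / y)) := by
  have hd0 : d ≠ 0 := by omega
  have hy : y ≠ 0 := hff.ne_zero_right (by omega)
  let e := RatFunc.algEquivOfTranscendental (x / y) (hff.transcendental_div (by omega))
  set a : k⟮x / y⟯ := e (algebraMap k[X] (RatFunc k) (-(Polynomial.X ^ d + 1)))
  have hirr : Irreducible (Polynomial.X ^ d - Polynomial.C a) := by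
    simpa only [Polynomial.mapEquiv_apply, Polynomial.map_sub, Polynomial.map_pow, Polynomial.map_X,
      Polynomial.map_C, RingEquiv.toRingHom_eq_coe, RingEquiv.coe_toRingHom,
      AlgEquiv.coe_ringEquiv] using
      (irreducible_X_pow_sub_C_neg_X_pow_add_one_ratFunc hd0).map (mapEquiv e.toRingEquiv)
  have hpow : y⁻¹ ^ d = algebraMap k⟮x / y⟯ K a := by
    simpa [a, e] using hff.inv_pow_eq_neg_div_pow_add_one hy
  have hroots := primitiveRoots_nonempty_of_isAlgClosed k k⟮x / y⟯ hd0
  have := isSplittingField_X_pow_sub_C_of_adjoin_eq_top hroots hpow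
    (adjoin_adjoin_div_inv_eq_top hff.1 hy)
  have : NeZero d := ⟨hd0⟩
  have := isCyclic_of_isSplittingField_X_pow_sub_C hroots hirr K
  exact ⟨isGalois_of_isSplittingField_X_pow_sub_C hroots hirr K,
    finrank_of_isSplittingField_X_pow_sub_C hroots hirr K,
    isCyclic_of_surjective _ (fixingSubgroupEquiv k⟮x / y⟯).symm.surjective⟩
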